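/- arXiv:1703.09879 — 3 statements merged into one kernel-verified Lean document; each statement's English description precedes it below -/
import Mathlib

section
/- Let f, g : ℝ³ → ℂ be smooth functions of (t, x, y) and let μ, ν, λ ∈ ℂ. Then the following bilinear operator identity holds pointwise: (1/2)[(DₓDₜ + Dₓ⁴ − Dᵧ²) f·f]·g·g − (1/2)[(DₓDₜ + Dₓ⁴ − Dᵧ²) g·g]·f·f = Dₓ[(Dₜ + 3λDₓ − √3 i μ Dᵧ + Dₓ³ − √3 i DₓDᵧ + ν) f·g]·(fg) + 3 Dₓ[(Dₓ² + μDₓ + (i/√3) Dᵧ − λ) f·g]·(Dₓ g·f) + √3 i Dᵧ[(Dₓ² + μDₓ + (i/√3) Dᵧ − λ) f·g]·(fg), where for a differential polynomial P(Dₓ,Dᵧ,Dₜ) with constant term c, the constant term acts as (P + c)f·g = P f·g + c f g. -/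
/-!
The Hirota derivative `D_v f·g` at `p` is the ordinary directional derivative of
`(u, w) ↦ f u * g w` along `(v, -v)`, evaluated on the diagonal `(p, p)`. Iterating the product
rule therefore expands every Hirota expression in the identity into a polynomial in the partial
derivatives of `f` and `g` at `p`; once mixed partials are identified (Schwarz), both sides agree
as polynomials in these, `√3` and `I`, using `√3 ^ 2 = 3` and `I ^ 2 = -1`.
-/

open Complex
open scoped ContDiff

/-- Hirota bilinear derivative `Dₜ^l Dₓ^m Dᵧ^n f·g` for functions of `(t,x,y) ∈ ℝ³`. -/
noncomputable def hirota3 (l m n : ℕ) (f g : ℝ × ℝ × ℝ → ℂ) (p : ℝ × ℝ × ℝ) : ℂ :=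
  iteratedDeriv l (fun c =>
    iteratedDeriv m (fun a =>
      iteratedDeriv n (fun b =>
        f (p.1 + c, p.2.1 + a, p.2.2 + b) * g (p.1 - c, p.2.1 - a, p.2.2 - b)) 0) 0) 0

def tensorMul {α β : Type*} [Mul β] (φ ψ : α → β) : α × α → β := fun z => φ z.1 * ψ z.2

@[simp]
theorem tensorMul_apply {α β : Type*} [Mul β] (φ ψ : α → β) (z : α × α) :
    tensorMul φ ψ z = φ z.1 * ψ z.2 := rfl

section DirDeriv

variable {E F 𝔸 : Type*} [NormedAddCommGroup E] [NormedSpace ℝ E]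
  [NormedAddCommGroup F] [NormedSpace ℝ F] [NormedCommRing 𝔸] [NormedAlgebra ℝ 𝔸]

noncomputable def dirDeriv (v : E) (φ : E → F) : E → F := fun p => fderiv ℝ φ p v

@[fun_prop]
theorem ContDiff.dirDeriv {φ : E → F} (hφ : ContDiff ℝ ∞ φ) (v : E) :
    ContDiff ℝ ∞ (_root_.dirDeriv v φ) :=
  (hφ.fderiv_right (by simp)).clm_apply contDiff_const

@[fun_prop]
theorem ContDiff.differentiable_dirDeriv {φ : E → F} (hφ : ContDiff ℝ ∞ φ) (v : E) :
    Differentiable ℝ (_root_.dirDeriv v φ) :=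
  (hφ.dirDeriv v).differentiable (by simp)

theorem ContDiff.iterate_dirDeriv {φ : E → F} (hφ : ContDiff ℝ ∞ φ) (v : E) (k : ℕ) :
    ContDiff ℝ ∞ ((_root_.dirDeriv v)^[k] φ) := by
  induction k with
  | zero => exact hφ
  | succ k ih => rw [Function.iterate_succ_apply']; exact ih.dirDeriv v

theorem dirDeriv_fun_add {φ ψ : E → F} (hφ : Differentiable ℝ φ) (hψ : Differentiable ℝ ψ)
    (v : E) : dirDeriv v (fun p => φ p + ψ p) = fun p => dirDeriv v φ p + dirDeriv v ψ p := by
  funext p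
  simp [dirDeriv, fderiv_fun_add (hφ p) (hψ p)]

theorem dirDeriv_fun_sub {φ ψ : E → F} (hφ : Differentiable ℝ φ) (hψ : Differentiable ℝ ψ)
    (v : E) : dirDeriv v (fun p => φ p - ψ p) = fun p => dirDeriv v φ p - dirDeriv v ψ p := by
  funext p
  simp [dirDeriv, fderiv_fun_sub (hφ p) (hψ p)]

theorem dirDeriv_sub {φ ψ : E → F} (hφ : Differentiable ℝ φ) (hψ : Differentiable ℝ ψ)
    (v : E) : dirDeriv v (φ - ψ) = dirDeriv v φ - dirDeriv v ψ :=
  dirDeriv_fun_sub hφ hψ v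

theorem dirDeriv_const (c : F) (v : E) : dirDeriv v (fun _ : E => c) = 0 := by
  funext p
  simp [dirDeriv]

theorem dirDeriv_fun_mul {φ ψ : E → 𝔸} (hφ : Differentiable ℝ φ) (hψ : Differentiable ℝ ψ)
    (v : E) :
    dirDeriv v (fun p => φ p * ψ p) = fun p => dirDeriv v φ p * ψ p + φ p * dirDeriv v ψ p := by
  funext p
  simp only [dirDeriv, fderiv_fun_mul (hφ p) (hψ p), add_apply, smul_apply, smul_eq_mul]
  ring

@[fun_prop]
theorem ContDiff.tensorMul {φ ψ : E → 𝔸} (hφ : ContDiff ℝ ∞ φ) (hψ : ContDiff ℝ ∞ ψ) :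
    ContDiff ℝ ∞ (_root_.tensorMul φ ψ) :=
  (hφ.comp contDiff_fst).mul (hψ.comp contDiff_snd)

theorem dirDeriv_tensorMul {φ ψ : E → 𝔸} (hφ : Differentiable ℝ φ)
    (hψ : Differentiable ℝ ψ) (v : E) :
    dirDeriv (v, -v) (tensorMul φ ψ)
      = tensorMul (dirDeriv v φ) ψ - tensorMul φ (dirDeriv v ψ) := by
  funext z
  have : HasFDerivAt (tensorMul φ ψ) _ z :=
    ((hφ z.1).hasFDerivAt.comp z hasFDerivAt_fst).mul
      ((hψ z.2).hasFDerivAt.comp z hasFDerivAt_snd)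
  rw [dirDeriv, this.fderiv]
  simp only [Function.comp_apply, add_apply, smul_apply,
    ContinuousLinearMap.comp_apply, ContinuousLinearMap.coe_snd', ContinuousLinearMap.coe_fst',
    map_neg, smul_eq_mul, Pi.sub_apply, tensorMul_apply, dirDeriv]
  ring

theorem dirDeriv_comm {φ : E → F} (hφ : ContDiff ℝ ∞ φ) (v w : E) :
    dirDeriv v (dirDeriv w φ) = dirDeriv w (dirDeriv v φ) := by
  funext p
  have hd : DifferentiableAt ℝ (fderiv ℝ φ) p :=
    (hφ.fderiv_right (m := ∞) (by simp)).differentiable (by simp) p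
  have key (a b : E) : dirDeriv a (dirDeriv b φ) p = fderiv ℝ (fderiv ℝ φ) p a b := by
    change fderiv ℝ (fun q => fderiv ℝ φ q b) p a = _
    simp [fderiv_clm_apply hd (differentiableAt_const b)]
  rw [key, key, hφ.contDiffAt.isSymmSndFDerivAt (by simpa using ENat.LEInfty.out)]

theorem iteratedDeriv_comp_add_smul {φ : E → F} (hφ : ContDiff ℝ ∞ φ) (z v : E) (k : ℕ)
    (s : ℝ) :
    iteratedDeriv k (fun s => φ (z + s • v)) s = (dirDeriv v)^[k] φ (z + s • v) := by
  induction k generalizing s with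
  | zero => rfl
  | succ k ih =>
    rw [iteratedDeriv_succ, funext ih, Function.iterate_succ_apply']
    have hline : HasDerivAt (fun s : ℝ => z + s • v) v s := by
      simpa using ((hasDerivAt_id s).smul_const v).const_add z
    exact (((hφ.iterate_dirDeriv v k).differentiable (by simp) _).hasFDerivAt.comp_hasDerivAt
      s hline).deriv

theorem iteratedDeriv₃_comp_add_smul {φ : E → F} (hφ : ContDiff ℝ ∞ φ) (z u v w : E)
    (l m n : ℕ) :
    iteratedDeriv l (fun c : ℝ => iteratedDeriv m (fun a : ℝ => iteratedDeriv n
        (fun b : ℝ => φ (z + c • u + a • v + b • w)) 0) 0) 0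
      = (dirDeriv u)^[l] ((dirDeriv v)^[m] ((dirDeriv w)^[n] φ)) z := by
  simp only [iteratedDeriv_comp_add_smul hφ,
    iteratedDeriv_comp_add_smul (hφ.iterate_dirDeriv w n),
    iteratedDeriv_comp_add_smul ((hφ.iterate_dirDeriv w n).iterate_dirDeriv v m),
    zero_smul, add_zero]

end DirDeriv

theorem hirota3_eq_iterate_dirDeriv {f g : ℝ × ℝ × ℝ → ℂ} (hf : ContDiff ℝ ∞ f)
    (hg : ContDiff ℝ ∞ g) (l m n : ℕ) (p : ℝ × ℝ × ℝ) :
    hirota3 l m n f g p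
      = (dirDeriv (((1, 0, 0), -(1, 0, 0)) : (ℝ × ℝ × ℝ) × (ℝ × ℝ × ℝ)))^[l]
          ((dirDeriv (((0, 1, 0), -(0, 1, 0)) : (ℝ × ℝ × ℝ) × (ℝ × ℝ × ℝ)))^[m]
            ((dirDeriv (((0, 0, 1), -(0, 0, 1)) : (ℝ × ℝ × ℝ) × (ℝ × ℝ × ℝ)))^[n]
              (tensorMul f g))) (p, p) := by
  rw [← iteratedDeriv₃_comp_add_smul (by fun_prop)]
  obtain ⟨t, x, y⟩ := p
  simp [hirota3, tensorMul, sub_eq_add_neg]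

/-- The fundamental Hirota bilinear operator identity underlying the Bäcklund
transformation for the KP-I equation (with arbitrary parameters `μ, ν, λ ∈ ℂ`). -/
theorem hirota_backlund_identity (f g : ℝ × ℝ × ℝ → ℂ)
    (hf : ContDiff ℝ (⊤ : ℕ∞) f) (hg : ContDiff ℝ (⊤ : ℕ∞) g)
    (μ ν lam : ℂ) (p : ℝ × ℝ × ℝ) :
    (1/2) * (hirota3 1 1 0 f f p + hirota3 0 4 0 f f p - hirota3 0 0 2 f f p)
        * (g p * g p)
      - (1/2) * (hirota3 1 1 0 g g p + hirota3 0 4 0 g g p - hirota3 0 0 2 g g p)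
        * (f p * f p)
    = hirota3 0 1 0
        (fun q => hirota3 1 0 0 f g q + 3 * lam * hirota3 0 1 0 f g q
          - (Real.sqrt 3 : ℂ) * I * μ * hirota3 0 0 1 f g q
          + hirota3 0 3 0 f g q
          - (Real.sqrt 3 : ℂ) * I * hirota3 0 1 1 f g q
          + ν * (f q * g q))
        (fun q => f q * g q) p
      + 3 * hirota3 0 1 0
        (fun q => hirota3 0 2 0 f g q + μ * hirota3 0 1 0 f g q
          + I / (Real.sqrt 3 : ℂ) * hirota3 0 0 1 f g q - lam * (f q * g q))
        (fun q => hirota3 0 1 0 g f q) p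
      + (Real.sqrt 3 : ℂ) * I * hirota3 0 0 1
        (fun q => hirota3 0 2 0 f g q + μ * hirota3 0 1 0 f g q
          + I / (Real.sqrt 3 : ℂ) * hirota3 0 0 1 f g q - lam * (f q * g q))
        (fun q => f q * g q) p := by
  have h3 : ((√3 : ℝ) : ℂ) ^ 2 = 3 := by norm_cast; simp
  have hdiv : I / ((√3 : ℝ) : ℂ) = (√3 : ℝ) * I / 3 := by
    field_simp
    linear_combination -h3
  simp only [hdiv]
  simp (disch := fun_prop (disch := simp)) only [hirota3_eq_iterate_dirDeriv,
    Function.iterate_succ_apply', Function.iterate_zero_apply, dirDeriv_sub, dirDeriv_tensorMul,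
    Pi.sub_apply, tensorMul_apply, dirDeriv_fun_add, dirDeriv_fun_sub, dirDeriv_fun_mul,
    dirDeriv_const, Pi.zero_apply]
  simp only [dirDeriv_comm hf (0, 1, 0) (1, 0, 0), dirDeriv_comm hg (0, 1, 0) (1, 0, 0),
    dirDeriv_comm hf (0, 0, 1) (0, 1, 0), dirDeriv_comm hg (0, 0, 1) (0, 1, 0),
    dirDeriv_comm (hf.dirDeriv (0, 1, 0)) (0, 0, 1) (0, 1, 0),
    dirDeriv_comm (hg.dirDeriv (0, 1, 0)) (0, 0, 1) (0, 1, 0)]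
  ring_nf
  simp only [I_sq, h3]
  ring
end

section
/- Define τ̃₁(t,x,y) = (x − t) + iy + √3 and τ̃₂(t,x,y) = (x − t)² + y² + 3 as smooth functions ℝ³ → ℂ. Then both τ̃₁ and τ̃₂ satisfy the bilinear KP-I equation (DₓDₜ + Dₓ⁴ − Dᵧ²) τ·τ = 0 on ℝ³. -/
open Complex

/-- `τ̃₁(t,x,y) = (x − t) + iy + √3`. -/
noncomputable def tauTilde1 (p : ℝ × ℝ × ℝ) : ℂ :=
  ((p.2.1 - p.1 : ℝ) : ℂ) + (p.2.2 : ℂ) * I + (Real.sqrt 3 : ℂ)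

/-- `τ̃₂(t,x,y) = (x − t)² + y² + 3`. -/
noncomputable def tauTilde2 (p : ℝ × ℝ × ℝ) : ℂ :=
  (((p.2.1 - p.1) ^ 2 + p.2.2 ^ 2 + 3 : ℝ) : ℂ)

/-! Both `τ̃` depend on `(t, x)` only through `x − t`, so `Dₜ` acts on `τ·τ` as `−Dₓ` and the
equation becomes `(Dₓ⁴ − Dₓ² − Dᵧ²) τ·τ = 0`. Along each axis `h ↦ τ(p + h) τ(p − h)` is an even
polynomial of degree at most four, so the remaining Hirota derivatives are read off from its
coefficients. -/

open Polynomial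

lemma iteratedDeriv_eval_ofReal (q : ℂ[X]) (n : ℕ) :
    iteratedDeriv n (fun a : ℝ => q.eval (a : ℂ)) =
      fun a : ℝ => (derivative^[n] q).eval (a : ℂ) := by
  induction n generalizing q with
  | zero => simp
  | succ n ih =>
    have hderiv :
        deriv (fun a : ℝ => q.eval (a : ℂ)) = fun a : ℝ => (derivative q).eval (a : ℂ) :=
      funext fun a => (q.hasDerivAt (a : ℂ)).comp_ofReal.deriv
    rw [iteratedDeriv_succ', hderiv, ih, Function.iterate_succ_apply]

lemma iteratedDeriv_eval_ofReal_zero (q : ℂ[X]) (n : ℕ) :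
    iteratedDeriv n (fun a : ℝ => q.eval (a : ℂ)) 0 = n.factorial * q.coeff n := by
  rw [iteratedDeriv_eval_ofReal]
  dsimp only
  rw [ofReal_zero, ← coeff_zero_eq_eval_zero, coeff_iterate_derivative,
    zero_add, Nat.descFactorial_self, nsmul_eq_mul]

theorem hirota3_eq_of_travelling {f g : ℝ × ℝ × ℝ → ℂ}
    (hf : ∀ t x y, f (t, x, y) = f (0, x - t, y)) (hg : ∀ t x y, g (t, x, y) = g (0, x - t, y))
    (l m n : ℕ) (p : ℝ × ℝ × ℝ) :
    hirota3 l m n f g p = (-1) ^ l * hirota3 0 (l + m) n f g p := by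
  obtain ⟨t, x, y⟩ := p
  set K : ℝ → ℂ := fun s =>
    iteratedDeriv n (fun b => f (t, x + s, y + b) * g (t, x - s, y - b)) 0 with hK
  have hshift : ∀ c a, iteratedDeriv n (fun b =>
      f (t + c, x + a, y + b) * g (t - c, x - a, y - b)) 0 = K (a - c) := by
    intro c a
    simp only [hK]
    congr 1; funext b
    rw [hf, hf t, hg, hg t]; ring_nf
  have hlhs : hirota3 l m n f g (t, x, y) =
      iteratedDeriv l (fun c => iteratedDeriv m (fun a => K (a - c)) 0) 0 := by
    simp only [hirota3, hshift]
  have hrhs : hirota3 0 (l + m) n f g (t, x, y) = iteratedDeriv (l + m) K 0 := by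
    simp [hirota3, hK]
  rw [hlhs, hrhs]
  simp only [iteratedDeriv_comp_sub_const, zero_sub]
  rw [iteratedDeriv_comp_neg, neg_zero, iteratedDeriv_eq_iterate, iteratedDeriv_eq_iterate,
    iteratedDeriv_eq_iterate, ← Function.iterate_add_apply]
  simp [Complex.real_smul]

lemma hirota3_zero_m_zero (m : ℕ) (f g : ℝ × ℝ × ℝ → ℂ) (p : ℝ × ℝ × ℝ) :
    hirota3 0 m 0 f g p =
      iteratedDeriv m (fun a => f (p.1, p.2.1 + a, p.2.2) * g (p.1, p.2.1 - a, p.2.2)) 0 := by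
  simp [hirota3]

lemma hirota3_zero_zero_n (n : ℕ) (f g : ℝ × ℝ × ℝ → ℂ) (p : ℝ × ℝ × ℝ) :
    hirota3 0 0 n f g p =
      iteratedDeriv n (fun b => f (p.1, p.2.1, p.2.2 + b) * g (p.1, p.2.1, p.2.2 - b)) 0 := by
  simp [hirota3]

lemma tauTilde1_travelling (t x y : ℝ) : tauTilde1 (t, x, y) = tauTilde1 (0, x - t, y) := by
  simp [tauTilde1]

lemma tauTilde2_travelling (t x y : ℝ) : tauTilde2 (t, x, y) = tauTilde2 (0, x - t, y) := by
  simp [tauTilde2]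

lemma tauTilde1_mul_shift_x (p : ℝ × ℝ × ℝ) :
    (fun a : ℝ => tauTilde1 (p.1, p.2.1 + a, p.2.2) * tauTilde1 (p.1, p.2.1 - a, p.2.2)) =
      fun a : ℝ => (C (tauTilde1 p ^ 2) - X ^ 2).eval (a : ℂ) := by
  funext a
  simp only [tauTilde1, eval_sub, eval_C, eval_pow, eval_X]
  push_cast
  ring

lemma tauTilde1_mul_shift_y (p : ℝ × ℝ × ℝ) :
    (fun b : ℝ => tauTilde1 (p.1, p.2.1, p.2.2 + b) * tauTilde1 (p.1, p.2.1, p.2.2 - b)) =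
      fun b : ℝ => (C (tauTilde1 p ^ 2) + X ^ 2).eval (b : ℂ) := by
  funext b
  simp only [tauTilde1, eval_add, eval_C, eval_pow, eval_X]
  push_cast
  linear_combination (-(b : ℂ) ^ 2) * I_sq

lemma tauTilde2_mul_shift_x (p : ℝ × ℝ × ℝ) :
    (fun a : ℝ => tauTilde2 (p.1, p.2.1 + a, p.2.2) * tauTilde2 (p.1, p.2.1 - a, p.2.2)) =
      fun a : ℝ =>
        let ξ : ℂ := p.2.1 - p.1
        let η : ℂ := p.2.2 ^ 2 + 3
        (C ((ξ ^ 2 + η) ^ 2) + C (2 * η - 2 * ξ ^ 2) * X ^ 2 + X ^ 4).eval (a : ℂ) := by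
  funext a
  simp only [tauTilde2, eval_add, eval_mul, eval_C, eval_pow, eval_X]
  push_cast
  ring

lemma tauTilde2_mul_shift_y (p : ℝ × ℝ × ℝ) :
    (fun b : ℝ => tauTilde2 (p.1, p.2.1, p.2.2 + b) * tauTilde2 (p.1, p.2.1, p.2.2 - b)) =
      fun b : ℝ =>
        let ξ : ℂ := (p.2.1 - p.1) ^ 2 + 3
        let η : ℂ := p.2.2
        (C ((ξ + η ^ 2) ^ 2) + C (2 * ξ - 2 * η ^ 2) * X ^ 2 + X ^ 4).eval (b : ℂ) := by
  funext b
  simp only [tauTilde2, eval_add, eval_mul, eval_C, eval_pow, eval_X]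
  push_cast
  ring

/-- Both `τ̃₁` and `τ̃₂` satisfy the bilinear KP-I equation
`(DₓDₜ + Dₓ⁴ − Dᵧ²) τ·τ = 0`. -/
theorem tauTilde_solve_bilinear_KPI :
    (∀ p : ℝ × ℝ × ℝ,
      hirota3 1 1 0 tauTilde1 tauTilde1 p + hirota3 0 4 0 tauTilde1 tauTilde1 p
        - hirota3 0 0 2 tauTilde1 tauTilde1 p = 0) ∧
    (∀ p : ℝ × ℝ × ℝ,
      hirota3 1 1 0 tauTilde2 tauTilde2 p + hirota3 0 4 0 tauTilde2 tauTilde2 p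
        - hirota3 0 0 2 tauTilde2 tauTilde2 p = 0) := by
  refine ⟨fun p => ?_, fun p => ?_⟩
  · rw [hirota3_eq_of_travelling tauTilde1_travelling tauTilde1_travelling,
      hirota3_zero_m_zero, hirota3_zero_m_zero, hirota3_zero_zero_n, tauTilde1_mul_shift_x,
      tauTilde1_mul_shift_y]
    simp only [iteratedDeriv_eval_ofReal_zero]
    simp only [coeff_add, coeff_sub, coeff_C, coeff_X_pow]
    norm_num
  · rw [hirota3_eq_of_travelling tauTilde2_travelling tauTilde2_travelling,
      hirota3_zero_m_zero, hirota3_zero_m_zero, hirota3_zero_zero_n, tauTilde2_mul_shift_x,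
      tauTilde2_mul_shift_y]
    simp only [iteratedDeriv_eval_ofReal_zero]
    simp only [coeff_add, coeff_C, coeff_C_mul, coeff_X_pow]
    norm_num
    ring
end

section
/- Let k ∈ (0, 1/2), b = √(1 − k²), p = bi, A = √((1 − 4k²)/(1 − k²)), λ = k²/4, μ* = −p·i/√3 = b/√3, and r = μ*A/(k + μ*). Set η₁ = k(x − py − t), η₂ = k(x + py − t), ι̃₁(t,x,y) = r e^{η₁/2} + e^{−η₁/2}, and ι̃₂(t,x,y) = e^{(η₁+η₂)/2} + e^{−(η₁+η₂)/2} + A( e^{(η₁−η₂)/2} + e^{(η₂−η₁)/2} ) = 2( cosh(k(x − t)) + A cos(k b y) ). Then the Bäcklund transformation relations hold on ℝ³: (Dₓ² + μ*Dₓ + (i/√3)Dᵧ) ι̃₁·ι̃₂ = λ ι̃₁ ι̃₂ and (Dₜ + 3λDₓ − √3 μ* i Dᵧ + Dₓ³ − √3 i DₓDᵧ) ι̃₁·ι̃₂ − (3k²μ*/4) ι̃₁ ι̃₂ = 0. -/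
open Complex

/-!
Both τ-functions are finite sums of exponentials of linear phases, and a Hirota operator
`P(Dₜ, Dₓ, Dᵧ)` acts on such exponentials through their wave vectors:
`P(D) e^{θ·q}·e^{Θ·q} = P(θ - Θ) e^{θ·q} e^{Θ·q}`.
With `X = e^{η₁/2}` and `Y = e^{η₂/2}`, each Bäcklund relation thus becomes a polynomial identity
in `X^{±1}, Y^{±1}`. The coefficient of every monomial vanishes by the dispersion relation
`3μ² = 1 - k²` (that is, `b² = 1 - k²`), by `r (k + μ) = μ A`, and by `μ² A² = μ² - k²`.
-/

noncomputable def planeWave (θ : ℂ × ℂ × ℂ) (q : ℝ × ℝ × ℝ) : ℂ :=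
  exp (θ.1 * q.1 + θ.2.1 * q.2.1 + θ.2.2 * q.2.2)

lemma planeWave_add (θ ζ : ℂ × ℂ × ℂ) (q : ℝ × ℝ × ℝ) :
    planeWave (θ + ζ) q = planeWave θ q * planeWave ζ q := by
  simp only [planeWave, Prod.fst_add, Prod.snd_add, ← exp_add]
  ring_nf

lemma planeWave_sub (θ ζ : ℂ × ℂ × ℂ) (q : ℝ × ℝ × ℝ) :
    planeWave (θ - ζ) q = planeWave θ q * planeWave (-ζ) q := by
  rw [sub_eq_add_neg, planeWave_add]

lemma planeWave_add_mul_planeWave_sub (θ Θ : ℂ × ℂ × ℂ) (q : ℝ × ℝ × ℝ) (c a b : ℝ) :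
    planeWave θ (q.1 + c, q.2.1 + a, q.2.2 + b) * planeWave Θ (q.1 - c, q.2.1 - a, q.2.2 - b)
      = planeWave θ q * planeWave Θ q * exp ((θ - Θ).1 * c) * exp ((θ - Θ).2.1 * a)
          * exp ((θ - Θ).2.2 * b) := by
  simp only [planeWave, Prod.fst_sub, Prod.snd_sub, ← exp_add]
  push_cast
  ring_nf

lemma iteratedDeriv_sum_mul_exp {ι : Type*} (S : Finset ι) (C d : ι → ℂ) (n : ℕ) :
    iteratedDeriv n (fun s : ℝ => ∑ i ∈ S, C i * exp (d i * s))
      = fun s : ℝ => ∑ i ∈ S, C i * d i ^ n * exp (d i * s) := by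
  induction n generalizing C with
  | zero => simp
  | succ n ih =>
    have hderiv : deriv (fun s : ℝ => ∑ i ∈ S, C i * exp (d i * s))
        = fun s : ℝ => ∑ i ∈ S, C i * d i * exp (d i * s) := by
      funext s
      refine (HasDerivAt.fun_sum fun i _ => ?_).deriv
      have := (((hasDerivAt_id (s : ℂ)).const_mul (d i)).cexp.const_mul (C i)).comp_ofReal
      simpa [mul_comm, mul_left_comm, mul_assoc] using this
    rw [iteratedDeriv_succ', hderiv, ih]
    funext s
    exact Finset.sum_congr rfl fun i _ => by ring

lemma iteratedDeriv_sum_mul_exp_zero {ι : Type*} (S : Finset ι) (C d : ι → ℂ) (n : ℕ) :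
    iteratedDeriv n (fun s : ℝ => ∑ i ∈ S, C i * exp (d i * s)) 0 = ∑ i ∈ S, C i * d i ^ n := by
  simp [iteratedDeriv_sum_mul_exp]

lemma iteratedDeriv₃_sum_mul_exp {ι : Type*} (S : Finset ι) (K : ι → ℂ) (δ : ι → ℂ × ℂ × ℂ)
    (l m n : ℕ) :
    iteratedDeriv l (fun c : ℝ => iteratedDeriv m (fun a : ℝ => iteratedDeriv n (fun b : ℝ =>
        ∑ i ∈ S, K i * exp ((δ i).1 * c) * exp ((δ i).2.1 * a) * exp ((δ i).2.2 * b)) 0) 0) 0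
      = ∑ i ∈ S, K i * (δ i).1 ^ l * (δ i).2.1 ^ m * (δ i).2.2 ^ n := by
  have hb (c a : ℝ) : iteratedDeriv n (fun b : ℝ =>
      ∑ i ∈ S, K i * exp ((δ i).1 * c) * exp ((δ i).2.1 * a) * exp ((δ i).2.2 * b)) 0
      = ∑ i ∈ S, K i * (δ i).2.2 ^ n * exp ((δ i).1 * c) * exp ((δ i).2.1 * a) := by
    rw [iteratedDeriv_sum_mul_exp_zero]
    exact Finset.sum_congr rfl fun i _ => by ring
  have ha (c : ℝ) : iteratedDeriv m (fun a : ℝ =>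
      ∑ i ∈ S, K i * (δ i).2.2 ^ n * exp ((δ i).1 * c) * exp ((δ i).2.1 * a)) 0
      = ∑ i ∈ S, K i * (δ i).2.2 ^ n * (δ i).2.1 ^ m * exp ((δ i).1 * c) := by
    rw [iteratedDeriv_sum_mul_exp_zero]
    exact Finset.sum_congr rfl fun i _ => by ring
  simp only [hb, ha, iteratedDeriv_sum_mul_exp_zero]
  exact Finset.sum_congr rfl fun i _ => by ring

lemma hirota3_sum_planeWave {ι κ : Type*} (S : Finset ι) (T : Finset κ) (C : ι → ℂ)
    (θ : ι → ℂ × ℂ × ℂ) (D : κ → ℂ) (Θ : κ → ℂ × ℂ × ℂ) (l m n : ℕ) (q : ℝ × ℝ × ℝ) :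
    hirota3 l m n (fun q => ∑ i ∈ S, C i * planeWave (θ i) q)
        (fun q => ∑ j ∈ T, D j * planeWave (Θ j) q) q
      = ∑ i ∈ S, ∑ j ∈ T, C i * D j
          * ((θ i - Θ j).1 ^ l * (θ i - Θ j).2.1 ^ m * (θ i - Θ j).2.2 ^ n)
          * (planeWave (θ i) q * planeWave (Θ j) q) := by
  have hprod (c a b : ℝ) :
      (∑ i ∈ S, C i * planeWave (θ i) (q.1 + c, q.2.1 + a, q.2.2 + b))
        * (∑ j ∈ T, D j * planeWave (Θ j) (q.1 - c, q.2.1 - a, q.2.2 - b))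
      = ∑ x ∈ S ×ˢ T, C x.1 * D x.2 * (planeWave (θ x.1) q * planeWave (Θ x.2) q)
          * exp ((θ x.1 - Θ x.2).1 * c) * exp ((θ x.1 - Θ x.2).2.1 * a)
          * exp ((θ x.1 - Θ x.2).2.2 * b) := by
    rw [Finset.sum_mul_sum, ← Finset.sum_product']
    refine Finset.sum_congr rfl fun x _ => ?_
    rw [mul_mul_mul_comm, planeWave_add_mul_planeWave_sub]
    ring
  simp only [hirota3, hprod]
  rw [iteratedDeriv₃_sum_mul_exp (S ×ˢ T)
    (fun x => C x.1 * D x.2 * (planeWave (θ x.1) q * planeWave (Θ x.2) q))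
    (fun x => θ x.1 - Θ x.2), Finset.sum_product]
  exact Finset.sum_congr rfl fun i _ => Finset.sum_congr rfl fun j _ => by ring

noncomputable def iota₁ (θ : ℂ × ℂ × ℂ) (r : ℂ) (q : ℝ × ℝ × ℝ) : ℂ :=
  r * planeWave θ q + planeWave (-θ) q

noncomputable def iota₂ (θ ζ : ℂ × ℂ × ℂ) (A : ℂ) (q : ℝ × ℝ × ℝ) : ℂ :=
  planeWave (θ + ζ) q + planeWave (-θ - ζ) q + A * (planeWave (θ - ζ) q + planeWave (ζ - θ) q)

lemma iota₁_eq_sum (θ : ℂ × ℂ × ℂ) (r : ℂ) :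
    iota₁ θ r = fun q => ∑ i : Fin 2, ![r, 1] i * planeWave (![θ, -θ] i) q := by
  funext q
  simp [iota₁, Fin.sum_univ_two]

lemma iota₂_eq_sum (θ ζ : ℂ × ℂ × ℂ) (A : ℂ) :
    iota₂ θ ζ A = fun q =>
      ∑ j : Fin 4, ![1, 1, A, A] j * planeWave (![θ + ζ, -θ - ζ, θ - ζ, ζ - θ] j) q := by
  funext q
  simp only [iota₂, Fin.sum_univ_four, Matrix.cons_val_zero, Matrix.cons_val_one,
    Matrix.cons_val, one_mul]
  ring

/-- `planeWave (halfPhase k p) = exp (η / 2)` for the phase `η = k (x - p y - t)`; the paper's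
`η₁, η₂` are the phases with `p = ± b i`. -/
noncomputable def halfPhase (k p : ℂ) : ℂ × ℂ × ℂ := (-k / 2, k / 2, -(k * p) / 2)

lemma iota₂_eq_cosh_add_cos (k b A : ℂ) (q : ℝ × ℝ × ℝ) :
    iota₂ (halfPhase k (b * I)) (halfPhase k (-(b * I))) A q
      = 2 * (cosh (k * (q.2.1 - q.1)) + A * cos (k * b * q.2.2)) := by
  rw [mul_add, two_cosh, mul_left_comm, two_cos]
  simp only [iota₂, planeWave, halfPhase, Prod.fst_add, Prod.snd_add, Prod.fst_sub, Prod.snd_sub,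
    Prod.fst_neg, Prod.snd_neg]
  ring_nf

/- In both certificates below, the multiples of `hα` (resp. `hβ`, `hγ`) trade the `y`-wave
numbers for `μ`; the remaining terms cancel monomial by monomial, and only `X X' Y` and `X X' Y'`
collect two contributions, which cancel through the relations for `r`. -/

lemma backlund_first (k p μ α A r : ℂ) (hα : α * p = -μ) (hr : r * (k + μ) = μ * A)
    (hrA : r * A * μ = μ - k) (q : ℝ × ℝ × ℝ) :
    hirota3 0 2 0 (iota₁ (halfPhase k p) r) (iota₂ (halfPhase k p) (halfPhase k (-p)) A) q
      + μ * hirota3 0 1 0 (iota₁ (halfPhase k p) r) (iota₂ (halfPhase k p) (halfPhase k (-p)) A) q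
      + α * hirota3 0 0 1 (iota₁ (halfPhase k p) r) (iota₂ (halfPhase k p) (halfPhase k (-p)) A) q
      = k ^ 2 / 4 * (iota₁ (halfPhase k p) r q * iota₂ (halfPhase k p) (halfPhase k (-p)) A q) := by
  simp only [iota₁_eq_sum, iota₂_eq_sum, hirota3_sum_planeWave]
  simp only [Fin.sum_univ_two, Fin.sum_univ_four, Matrix.cons_val_zero, Matrix.cons_val_one,
    Matrix.cons_val_two, Matrix.cons_val_three, Matrix.head_cons, Matrix.tail_cons, planeWave_add,
    planeWave_sub, Prod.fst_sub, Prod.snd_sub, Prod.fst_add, Prod.snd_add, Prod.fst_neg,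
    Prod.snd_neg]
  set X := planeWave (halfPhase k p) q
  set X' := planeWave (-halfPhase k p) q
  set Y := planeWave (halfPhase k (-p)) q
  set Y' := planeWave (-halfPhase k (-p)) q
  simp only [halfPhase]
  linear_combination k * (-r / 2 * X * (X * Y) - r / 2 * X * (X' * Y') + r * A / 2 * X * (X * Y')
      - 3 * r * A / 2 * X * (X' * Y) + 1 / 2 * X' * (X * Y) + 1 / 2 * X' * (X' * Y')
      + 3 * A / 2 * X' * (X * Y') - A / 2 * X' * (X' * Y)) * hα
    + 2 * k * X * X' * Y' * hr + 2 * k * X * X' * Y * hrA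

lemma backlund_second (k p μ β γ A r : ℂ) (hβ : β * p = -3 * μ ^ 2) (hγ : γ * p = -3 * μ)
    (hμ : 3 * μ ^ 2 = 1 - k ^ 2) (hr : r * (k + μ) = μ * A) (hrA : r * A * μ = μ - k)
    (q : ℝ × ℝ × ℝ) :
    hirota3 1 0 0 (iota₁ (halfPhase k p) r) (iota₂ (halfPhase k p) (halfPhase k (-p)) A) q
      + 3 * (k ^ 2 / 4)
        * hirota3 0 1 0 (iota₁ (halfPhase k p) r) (iota₂ (halfPhase k p) (halfPhase k (-p)) A) q
      - β * hirota3 0 0 1 (iota₁ (halfPhase k p) r) (iota₂ (halfPhase k p) (halfPhase k (-p)) A) q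
      + hirota3 0 3 0 (iota₁ (halfPhase k p) r) (iota₂ (halfPhase k p) (halfPhase k (-p)) A) q
      - γ * hirota3 0 1 1 (iota₁ (halfPhase k p) r) (iota₂ (halfPhase k p) (halfPhase k (-p)) A) q
      - 3 * k ^ 2 * μ / 4
        * (iota₁ (halfPhase k p) r q * iota₂ (halfPhase k p) (halfPhase k (-p)) A q) = 0 := by
  simp only [iota₁_eq_sum, iota₂_eq_sum, hirota3_sum_planeWave]
  simp only [Fin.sum_univ_two, Fin.sum_univ_four, Matrix.cons_val_zero, Matrix.cons_val_one,
    Matrix.cons_val_two, Matrix.cons_val_three, Matrix.head_cons, Matrix.tail_cons, planeWave_add,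
    planeWave_sub, Prod.fst_sub, Prod.snd_sub, Prod.fst_add, Prod.snd_add, Prod.fst_neg,
    Prod.snd_neg]
  set X := planeWave (halfPhase k p) q
  set X' := planeWave (-halfPhase k p) q
  set Y := planeWave (halfPhase k (-p)) q
  set Y' := planeWave (-halfPhase k (-p)) q
  simp only [halfPhase]
  linear_combination -k * (-r / 2 * X * (X * Y) - r / 2 * X * (X' * Y') + r * A / 2 * X * (X * Y')
      - 3 * r * A / 2 * X * (X' * Y) + 1 / 2 * X' * (X * Y) + 1 / 2 * X' * (X' * Y')
      + 3 * A / 2 * X' * (X * Y') - A / 2 * X' * (X' * Y)) * hβ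
    - k ^ 2 / 4 * (r * X * X * Y - 3 * r * X * X' * Y' + r * A * X * X * Y' - 3 * r * A * X * X' * Y
      - 3 * X * X' * Y + X' * X' * Y' - 3 * A * X * X' * Y' + A * X' * X' * Y) * hγ
    + (-(k / 2) * r * X * X * Y - k / 2 * A * X' * X' * Y + k / 2 * r * A * X * X * Y'
      + k / 2 * X' * X' * Y' + X * X' * Y' * (3 * k / 2 * r - k / 2 * A)
      + X * X' * Y * (k / 2 * r * A - 3 * k / 2)) * hμ
    + (3 * k ^ 2 - 6 * k * μ) * X * X' * Y' * hr - (6 * k * μ + 3 * k ^ 2) * X * X' * Y * hrA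

lemma backlund_real_parameters {k b A : ℝ} (hk : k ∈ Set.Ioo (0 : ℝ) (1 / 2))
    (hb : b = √(1 - k ^ 2)) (hA : A = √((1 - 4 * k ^ 2) / (1 - k ^ 2))) :
    3 * (b / √3) ^ 2 = 1 - k ^ 2 ∧ (b / √3) ^ 2 * A ^ 2 = (b / √3) ^ 2 - k ^ 2
      ∧ 0 < k + b / √3 := by
  obtain ⟨hk0, hk2⟩ := hk
  have h1 : 0 < 1 - k ^ 2 := by nlinarith
  have h4 : 0 ≤ 1 - 4 * k ^ 2 := by nlinarith
  have hb2 : b ^ 2 = 1 - k ^ 2 := by rw [hb, Real.sq_sqrt h1.le]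
  have hA2 : A ^ 2 = (1 - 4 * k ^ 2) / (1 - k ^ 2) := by rw [hA, Real.sq_sqrt (by positivity)]
  have h3 : √3 ^ 2 = 3 := Real.sq_sqrt (by norm_num)
  refine ⟨?_, ?_, by rw [hb]; positivity⟩
  · rw [div_pow, h3, hb2]; ring
  · rw [div_pow, h3, hb2, hA2]; field_simp; ring

lemma backlund_parameters {k b A : ℝ} {μ r : ℂ} (hk : k ∈ Set.Ioo (0 : ℝ) (1 / 2))
    (hb : b = √(1 - k ^ 2)) (hA : A = √((1 - 4 * k ^ 2) / (1 - k ^ 2)))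
    (hμ : μ = ((b / √3 : ℝ) : ℂ)) (hr : r = μ * A / (k + μ)) :
    3 * μ ^ 2 = 1 - (k : ℂ) ^ 2 ∧ r * (k + μ) = μ * A ∧ r * A * μ = μ - k := by
  obtain ⟨hμ3, hμA, hkμ⟩ := backlund_real_parameters hk hb hA
  have hkμ' : (k : ℂ) + μ ≠ 0 := by rw [hμ]; exact_mod_cast hkμ.ne'
  have hμA' : μ ^ 2 * (A : ℂ) ^ 2 = μ ^ 2 - (k : ℂ) ^ 2 := by rw [hμ]; exact_mod_cast hμA
  have hr' : r * (k + μ) = μ * A := by rw [hr]; field_simp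
  refine ⟨by rw [hμ]; exact_mod_cast hμ3, hr', mul_right_cancel₀ hkμ' ?_⟩
  linear_combination A * μ * hr' + hμA'

/-- The Bäcklund transformation relations between `ι̃₁` and `ι̃₂`. -/
theorem backlund_iota1_iota2 (k b A : ℝ) (hk : k ∈ Set.Ioo (0 : ℝ) (1/2))
    (hb : b = Real.sqrt (1 - k ^ 2))
    (hA : A = Real.sqrt ((1 - 4 * k ^ 2) / (1 - k ^ 2)))
    (pc lam μs r : ℂ)
    (hpc : pc = (b : ℂ) * Complex.I)
    (hlam : lam = (k : ℂ) ^ 2 / 4)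
    (hμs : μs = -(pc * Complex.I) / (Real.sqrt 3 : ℂ))
    (hr : r = μs * (A : ℂ) / ((k : ℂ) + μs))
    (η₁ η₂ : ℝ × ℝ × ℝ → ℂ)
    (hη₁ : η₁ = fun q => (k : ℂ) * ((q.2.1 : ℂ) - pc * (q.2.2 : ℂ) - (q.1 : ℂ)))
    (hη₂ : η₂ = fun q => (k : ℂ) * ((q.2.1 : ℂ) + pc * (q.2.2 : ℂ) - (q.1 : ℂ)))
    (ι₁ ι₂ : ℝ × ℝ × ℝ → ℂ)
    (hι₁ : ι₁ = fun q => r * Complex.exp (η₁ q / 2) + Complex.exp (-(η₁ q) / 2))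
    (hι₂ : ι₂ = fun q =>
      Complex.exp ((η₁ q + η₂ q) / 2) + Complex.exp (-(η₁ q + η₂ q) / 2)
        + (A : ℂ) * (Complex.exp ((η₁ q - η₂ q) / 2)
            + Complex.exp ((η₂ q - η₁ q) / 2))) :
    (∀ q : ℝ × ℝ × ℝ,
      ι₂ q = 2 * (Complex.cosh ((k : ℂ) * ((q.2.1 : ℂ) - (q.1 : ℂ)))
        + (A : ℂ) * Complex.cos ((k : ℂ) * (b : ℂ) * (q.2.2 : ℂ)))) ∧
    (∀ q : ℝ × ℝ × ℝ,
      hirota3 0 2 0 ι₁ ι₂ q + μs * hirota3 0 1 0 ι₁ ι₂ q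
        + I / (Real.sqrt 3 : ℂ) * hirota3 0 0 1 ι₁ ι₂ q
        = lam * (ι₁ q * ι₂ q)) ∧
    (∀ q : ℝ × ℝ × ℝ,
      hirota3 1 0 0 ι₁ ι₂ q + 3 * lam * hirota3 0 1 0 ι₁ ι₂ q
        - (Real.sqrt 3 : ℂ) * μs * I * hirota3 0 0 1 ι₁ ι₂ q
        + hirota3 0 3 0 ι₁ ι₂ q
        - (Real.sqrt 3 : ℂ) * I * hirota3 0 1 1 ι₁ ι₂ q
        - 3 * (k : ℂ) ^ 2 * μs / 4 * (ι₁ q * ι₂ q) = 0) := by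
  have hμ : μs = ((b / √3 : ℝ) : ℂ) := by rw [hμs, hpc, mul_assoc, I_mul_I]; push_cast; ring
  obtain ⟨hμ3, hr', hrA⟩ := backlund_parameters hk hb hA hμ hr
  have hs : ((√3 : ℝ) : ℂ) ^ 2 = 3 := by norm_cast; exact Real.sq_sqrt (by norm_num)
  have hbμ : (b : ℂ) = √3 * μs := by rw [hμ]; push_cast; field_simp
  have hι₁' : ι₁ = iota₁ (halfPhase k pc) r := by
    subst hι₁ hη₁
    funext q
    simp only [iota₁, planeWave, halfPhase, Prod.fst_neg, Prod.snd_neg]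
    ring_nf
  have hι₂' : ι₂ = iota₂ (halfPhase k pc) (halfPhase k (-pc)) A := by
    subst hι₂ hη₁ hη₂
    funext q
    simp only [iota₂, planeWave, halfPhase, Prod.fst_add, Prod.snd_add, Prod.fst_sub,
      Prod.snd_sub, Prod.fst_neg, Prod.snd_neg]
    ring_nf
  subst hι₁' hι₂' hlam hpc
  refine ⟨iota₂_eq_cosh_add_cos k b A, backlund_first k _ μs _ A r ?_ hr' hrA,
    backlund_second k _ μs _ _ A r ?_ ?_ hμ3 hr' hrA⟩
  · field_simp
    linear_combination (b : ℂ) * I_sq - hbμ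
  · linear_combination (√3 * μs * b) * I_sq - √3 * μs * hbμ - μs ^ 2 * hs
  · linear_combination (√3 * b) * I_sq - √3 * hbμ - μs * hs
end
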